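/- Let L be an integral ℓ-monoid, let α be a fuzzy regular expression over a finite alphabet X, and let Y be the alphabet associated with α. Then for every u ∈ X*, the set {φ*_α(v)⊗‖α_R‖(v) : v ∈ U_Y(u)} has a least upper bound in L, and ‖α‖(u) = ⋁_{v∈U_Y(u)} φ*_α(v)⊗‖α_R‖(v). -/

import Mathlib

attribute [local instance] Classical.propDecidable

/-- A lattice-ordered monoid (ℓ-monoid): a lattice with least element `⊥` and greatest
element `⊤`, together with a monoid structure (multiplication `*`, unit `1`, playing the
role of `e`) such that `⊥` (playing the role of the scalar `0`) is absorbing and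
multiplication distributes over binary joins on both sides. -/
class LMonoid (L : Type*) extends Lattice L, BoundedOrder L, Monoid L where
  mul_bot : ∀ x : L, x * ⊥ = ⊥
  bot_mul : ∀ x : L, ⊥ * x = ⊥
  mul_sup : ∀ x y z : L, x * (y ⊔ z) = x * y ⊔ x * z
  sup_mul : ∀ x y z : L, (x ⊔ y) * z = x * z ⊔ y * z

/-- An integral ℓ-monoid: the unit of the multiplication is the top element of the lattice. -/
class IntegralLMonoid (L : Type*) extends LMonoid L where
  one_eq_top : (1 : L) = ⊤

/-- Fuzzy regular expressions over an alphabet `X` with scalars in `L`. -/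
inductive FRE (X L : Type*) where
  | zero : FRE X L
  | eps : FRE X L
  | char : X → FRE X L
  | smul : L → FRE X L → FRE X L
  | plus : FRE X L → FRE X L → FRE X L
  | comp : FRE X L → FRE X L → FRE X L
  | star : FRE X L → FRE X L

/-- The set of scalars of `L` occurring in a fuzzy regular expression. -/
def FRE.scalars {X L : Type*} : FRE X L → Set L
  | .zero => ∅
  | .eps => ∅
  | .char _ => ∅
  | .smul lam β => insert lam β.scalars
  | .plus β γ => β.scalars ∪ γ.scalars
  | .comp β γ => β.scalars ∪ γ.scalars
  | .star β => β.scalars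

noncomputable section

namespace Fz

variable {L : Type*} [IntegralLMonoid L]

/-- Composition of fuzzy relations: `(R ∘ S)(a,b) = ⋁_{c} R(a,c) ⊗ S(c,b)`. -/
def fcomp {A : Type*} [Fintype A] (R S : A → A → L) : A → A → L :=
  fun a b => Finset.univ.sup fun c => R a c * S c b

/-- Composition of a fuzzy relation with a fuzzy set: `(R ∘ f)(a) = ⋁_{b} R(a,b) ⊗ f(b)`. -/
def fcompf {A : Type*} [Fintype A] (R : A → A → L) (f : A → L) : A → L :=
  fun a => Finset.univ.sup fun b => R a b * f b

/-- Composition of a fuzzy set with a fuzzy relation: `(f ∘ R)(a) = ⋁_{b} f(b) ⊗ R(b,a)`. -/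
def fcompfR {A : Type*} [Fintype A] (f : A → L) (R : A → A → L) : A → L :=
  fun a => Finset.univ.sup fun b => f b * R b a

/-- Powers of a fuzzy relation: `R⁰` is the crisp equality and `R^{k+1} = R^k ∘ R`. -/
def rpow {A : Type*} [Fintype A] (R : A → A → L) : ℕ → A → A → L
  | 0 => fun a b => if a = b then 1 else ⊥
  | k + 1 => fcomp (rpow R k) R

private def dstarAux {A Z : Type*} [Fintype A] (δ : A → Z → A → L) : A → List Z → A → L
  | a, [], b => if a = b then 1 else ⊥
  | a, z :: w, b => Finset.univ.sup fun c => dstarAux δ a w c * δ c z b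

/-- The extension of a fuzzy transition relation to words:
`δ(a, ε, b) = 1` if `a = b` and `⊥` otherwise, and
`δ(a, ux, b) = ⋁_{c} δ(a, u, c) ⊗ δ(c, x, b)`. -/
def dstar {A Z : Type*} [Fintype A] (δ : A → Z → A → L) (a : A) (w : List Z) (b : A) : L :=
  dstarAux δ a w.reverse b

/-- Fuzzy language recognized by a fuzzy automaton with a single crisp initial state `a0`:
`L(A)(u) = ⋁_{b} δ(a0, u, b) ⊗ τ(b)`. -/
def lang {A Z : Type*} [Fintype A] (δ : A → Z → A → L) (a0 : A) (τ : A → L)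
    (w : List Z) : L :=
  Finset.univ.sup fun b => dstar δ a0 w b * τ b

/-- Concatenation of fuzzy languages: `(fg)(u) = ⋁_{u = vw} f(v) ⊗ g(w)`
(a finite join over the factorizations of `u`). -/
def fconcat {X : Type*} (f g : List X → L) : List X → L :=
  fun u => (Finset.range (u.length + 1)).sup fun i => f (u.take i) * g (u.drop i)

/-- Powers of a fuzzy language: `f⁰` is the characteristic function of the empty word,
and `f^{n+1} = fⁿ f`. -/
def fpow {X : Type*} (f : List X → L) : ℕ → List X → L
  | 0 => fun u => if u = [] then 1 else ⊥
  | n + 1 => fconcat (fpow f n) f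

/-- `IsNorm α f` asserts that `f` is the fuzzy language `‖α‖` represented by the fuzzy
regular expression `α` (for the star, `‖β*‖(u)` is the least upper bound of the powers,
which is required to exist). -/
inductive IsNorm {X : Type*} : FRE X L → (List X → L) → Prop
  | zero : IsNorm .zero fun _ => ⊥
  | eps : IsNorm .eps fun u => if u = [] then 1 else ⊥
  | char (x : X) : IsNorm (.char x) fun u => if u = [x] then 1 else ⊥
  | smul (lam : L) {β : FRE X L} {f : List X → L} :
      IsNorm β f → IsNorm (.smul lam β) fun u => lam * f u
  | plus {β γ : FRE X L} {f g : List X → L} :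
      IsNorm β f → IsNorm γ g → IsNorm (.plus β γ) fun u => f u ⊔ g u
  | comp {β γ : FRE X L} {f g : List X → L} :
      IsNorm β f → IsNorm γ g → IsNorm (.comp β γ) (fconcat f g)
  | star {β : FRE X L} {f g : List X → L} :
      IsNorm β f → (∀ u, IsLUB {l | ∃ n : ℕ, l = fpow f n u} (g u)) →
      IsNorm (.star β) g

/-- The ordinary regular expression `α_R` over `X ∪ Y` obtained from a fuzzy regular
expression `α` by replacing each scalar `λ` by the associated letter `λ' = sc λ ∈ Y`. -/
def toReg {X Y : Type*} (sc : L → Y) : FRE X L → RegularExpression (X ⊕ Y)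
  | .zero => 0
  | .eps => 1
  | .char x => RegularExpression.char (Sum.inl x)
  | .smul lam β => RegularExpression.char (Sum.inr (sc lam)) * toReg sc β
  | .plus β γ => toReg sc β + toReg sc γ
  | .comp β γ => toReg sc β * toReg sc γ
  | .star β => (toReg sc β).star

/-- `U_Y(u)`: the set of words over `X ∪ Y` from which deleting all letters of `Y`
yields `u` (the shuffle of `u` with `Y*`). -/
def UY {X : Type*} (Y : Type*) (u : List X) : Set (List (X ⊕ Y)) :=
  {v | v.filterMap (fun z => z.getLeft?) = u}

/-- The homomorphism `φ*_α : (X ∪ Y)* → (L, ⊗, 1)` determined by mapping every letter of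
`X` to `1` and every letter `λ' ∈ Y` to the corresponding scalar `λ = φY λ'`. -/
def phiStar {X Y : Type*} (φY : Y → L) (v : List (X ⊕ Y)) : L :=
  (v.map (Sum.elim (fun _ => (1 : L)) φY)).prod

/-- The language `‖α_R‖` of the regular expression `α_R`, viewed as a fuzzy language
with membership values in `{0, 1} ⊆ L`. -/
def langR {X Y : Type*} (sc : L → Y) (α : FRE X L) (v : List (X ⊕ Y)) : L :=
  if v ∈ (toReg sc α).matches' then 1 else ⊥

/-- The reflexive fuzzy relation `R` on the state set of a nondeterministic automaton over
`X ∪ Y`: `R(a,a) = 1` and, for `a ≠ b`, `R(a,b) = ⋁_{λ' ∈ Y} λ ⊗ δ(a, λ', b)`. -/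
def Rstep {X Y A : Type*} [Fintype A] [Fintype Y] (φY : Y → L)
    (δ : A → X ⊕ Y → A → L) : A → A → L :=
  fun a b => if a = b then 1 else Finset.univ.sup fun y : Y => φY y * δ a (Sum.inr y) b

/-- The fuzzy relation `R_A = Rⁿ`, `n = |A|`: the least transitive fuzzy relation
containing `R`. -/
def RA {X Y A : Type*} [Fintype A] [Fintype Y] (φY : Y → L)
    (δ : A → X ⊕ Y → A → L) : A → A → L :=
  rpow (Rstep φY δ) (Fintype.card A)

/-- The set `{φ*_α(v) ⊗ δ^A(a,v,b) : v ∈ U_Y(x)}` whose least upper bound defines the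
transition `δ^{A_α}(a, x, b)` of the fuzzy automaton associated with `A` and `α`. -/
def dset {X Y A : Type*} [Fintype A] (φY : Y → L) (δ : A → X ⊕ Y → A → L)
    (a : A) (x : X) (b : A) : Set L :=
  {l | ∃ v ∈ UY Y [x], l = phiStar φY v * dstar δ a v b}

/-- The set `{⋁_{b} φ*_α(v) ⊗ δ^A(a,v,b) ⊗ τ(b) : v ∈ Y*}` whose least upper bound defines
the terminal degree `τ^{A_α}(a)` of the fuzzy automaton associated with `A` and `α`. -/
def tset {X Y A : Type*} [Fintype A] (φY : Y → L) (δ : A → X ⊕ Y → A → L)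
    (τ : A → L) (a : A) : Set L :=
  {l | ∃ w : List Y, l = Finset.univ.sup fun b =>
    phiStar φY ((w.map Sum.inr : List (X ⊕ Y))) *
      dstar δ a (w.map Sum.inr) b * τ b}

end Fz

end

/-!
By induction on `α`, `‖α‖(u)` dominates `φ*(v)` for every `v ∈ ‖α_R‖ ∩ U_Y(u)` and is the join
of `φ*` over a *finite* subset of these words. Finiteness is what makes the induction go through,
since `⊗` distributes over finite joins only. For the star, integrality gives
`‖β‖ⁿ⁺¹(u) ≤ ‖β‖ⁿ(u)` as soon as `n ≥ |u|` (some factor is then evaluated at the empty word), so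
the least upper bound of the powers is already attained among the first `|u| + 1` of them.
-/

namespace LMonoid

variable {L : Type*} [LMonoid L]

instance : MulLeftMono L :=
  ⟨fun c a b h => by
    calc c * a ≤ c * a ⊔ c * b := le_sup_left
      _ = c * b := by rw [← mul_sup, sup_eq_right.mpr h]⟩

instance : MulRightMono L :=
  ⟨fun c a b h => by
    calc a * c ≤ a * c ⊔ b * c := le_sup_left
      _ = b * c := by rw [← sup_mul, sup_eq_right.mpr h]⟩

lemma mul_finset_sup {ι : Type*} (c : L) (s : Finset ι) (f : ι → L) :
    c * s.sup f = s.sup fun i => c * f i :=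
  Finset.apply_sup_eq_sup_comp (c * ·) (mul_sup c) (mul_bot c)

lemma finset_sup_mul {ι : Type*} (c : L) (s : Finset ι) (f : ι → L) :
    s.sup f * c = s.sup fun i => f i * c :=
  Finset.apply_sup_eq_sup_comp (· * c) (fun a b => sup_mul a b c) (bot_mul c)

end LMonoid

lemma IntegralLMonoid.le_one {L : Type*} [IntegralLMonoid L] (a : L) : a ≤ 1 :=
  one_eq_top (L := L) ▸ le_top

namespace Fz

open Computability

variable {L X Y : Type*} [IntegralLMonoid L] (φY : Y → L)

lemma phiStar_append (v w : List (X ⊕ Y)) :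
    phiStar φY (v ++ w) = phiStar φY v * phiStar φY w := by
  simp [phiStar]

lemma phiStar_cons_inr (y : Y) (v : List (X ⊕ Y)) :
    phiStar φY (Sum.inr y :: v) = φY y * phiStar φY v := by
  simp [phiStar]

lemma finset_sup_phiStar_image₂_append (A B : Finset (List (X ⊕ Y))) :
    (Finset.image₂ (· ++ ·) A B).sup (phiStar φY) = A.sup (phiStar φY) * B.sup (phiStar φY) := by
  rw [Finset.sup_image₂_left, LMonoid.finset_sup_mul]
  refine Finset.sup_congr rfl fun a _ => ?_
  rw [LMonoid.mul_finset_sup]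
  exact Finset.sup_congr rfl fun b _ => phiStar_append φY a b

lemma le_fconcat (f g : List X → L) (u₁ u₂ : List X) :
    f u₁ * g u₂ ≤ fconcat f g (u₁ ++ u₂) := by
  have hmem : u₁.length ∈ Finset.range ((u₁ ++ u₂).length + 1) := by
    rw [Finset.mem_range, List.length_append]; omega
  simpa only [fconcat, List.take_left, List.drop_left] using
    Finset.le_sup (f := fun i => f ((u₁ ++ u₂).take i) * g ((u₁ ++ u₂).drop i)) hmem

lemma fpow_succ_le_of_length_le (f : List X → L) {n : ℕ} {u : List X} (hu : u.length ≤ n) :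
    fpow f (n + 1) u ≤ fpow f n u := by
  induction n generalizing u with
  | zero =>
    rw [List.eq_nil_of_length_eq_zero (Nat.le_zero.mp hu)]
    simpa [fpow] using IntegralLMonoid.le_one _
  | succ n ih =>
    change fconcat (fpow f (n + 1)) f u ≤ _
    refine Finset.sup_le fun i hi => ?_
    rcases (Nat.lt_succ_iff.mp (Finset.mem_range.mp hi)).eq_or_lt with rfl | hi
    · rw [List.take_length, List.drop_length]
      exact mul_le_of_le_one_right' (IntegralLMonoid.le_one _)
    · calc fpow f (n + 1) (u.take i) * f (u.drop i)
          ≤ fpow f n (u.take i) * f (u.drop i) :=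
            mul_le_mul_left (ih (by rw [List.length_take]; omega)) _
        _ ≤ fconcat (fpow f n) f u := by
            simpa only [List.take_append_drop] using le_fconcat (fpow f n) f (u.take i) (u.drop i)

lemma eq_sup_fpow_of_isLUB {f : List X → L} {u : List X} {l : L}
    (hl : IsLUB {l | ∃ n : ℕ, l = fpow f n u} l) :
    l = (Finset.range (u.length + 1)).sup fun n => fpow f n u := by
  refine hl.unique ⟨?_, fun b hb => Finset.sup_le fun n _ => hb ⟨n, rfl⟩⟩
  rintro _ ⟨n, rfl⟩
  induction n with
  | zero => exact Finset.le_sup (f := fun n => fpow f n u) (by simp)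
  | succ n ih =>
    by_cases hn : n + 1 ≤ u.length
    · exact Finset.le_sup (f := fun n => fpow f n u) (Finset.mem_range.mpr (by omega))
    · exact (fpow_succ_le_of_length_le f (by omega)).trans ih

def IsFiniteShuffleJoin (f : List X → L) (P : Language (X ⊕ Y)) : Prop :=
  ∀ u, (∀ v ∈ P, v ∈ UY Y u → phiStar φY v ≤ f u) ∧
    ∃ V : Finset (List (X ⊕ Y)), (∀ v ∈ V, v ∈ P ∧ v ∈ UY Y u) ∧ f u = V.sup (phiStar φY)

lemma isFiniteShuffleJoin_zero : IsFiniteShuffleJoin φY (fun (_ : List X) => ⊥) 0 :=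
  fun _ => ⟨fun v hv => absurd hv (Language.notMem_zero v), ∅, by simp, rfl⟩

lemma isFiniteShuffleJoin_singleton (w : List (X ⊕ Y)) :
    IsFiniteShuffleJoin φY
      (fun u => if u = w.filterMap (fun z => z.getLeft?) then phiStar φY w else ⊥) {w} := by
  intro u
  by_cases hu : u = w.filterMap (fun z => z.getLeft?)
  · refine ⟨fun v hv _ => ?_, {w}, fun v hv => ?_, by simp [hu]⟩
    · rw [Set.mem_singleton_iff.mp hv]
      exact (if_pos hu).ge
    · rw [Finset.mem_singleton.mp hv]
      exact ⟨rfl, hu.symm⟩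
  · refine ⟨fun v hv hvu => absurd ?_ hu, ∅, by simp, by simp [hu]⟩
    rw [← Set.mem_singleton_iff.mp hv]
    exact hvu.symm

lemma isFiniteShuffleJoin_one :
    IsFiniteShuffleJoin φY (fun (u : List X) => if u = [] then 1 else ⊥) 1 :=
  isFiniteShuffleJoin_singleton φY []

variable {φY}

namespace IsFiniteShuffleJoin

variable {f g : List X → L} {P Q : Language (X ⊕ Y)}

lemma smul (hf : IsFiniteShuffleJoin φY f P) (y : Y) :
    IsFiniteShuffleJoin φY (fun u => φY y * f u) ({[Sum.inr y]} * P) := by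
  intro u
  obtain ⟨hbound, V, hV, hfV⟩ := hf u
  refine ⟨?_, V.image (Sum.inr y :: ·), ?_, ?_⟩
  · rintro _ ⟨_, rfl, v, hv, rfl⟩ hvu
    change phiStar φY (Sum.inr y :: v) ≤ φY y * f u
    rw [phiStar_cons_inr]
    exact mul_le_mul_right (hbound v hv hvu) _
  · simp only [Finset.mem_image]
    rintro _ ⟨v, hv, rfl⟩
    exact ⟨⟨[Sum.inr y], rfl, v, (hV v hv).1, rfl⟩, (hV v hv).2⟩
  · change φY y * f u = _
    rw [Finset.sup_image, hfV, LMonoid.mul_finset_sup]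
    exact Finset.sup_congr rfl fun v _ => (phiStar_cons_inr φY y v).symm

lemma sup (hf : IsFiniteShuffleJoin φY f P) (hg : IsFiniteShuffleJoin φY g Q) :
    IsFiniteShuffleJoin φY (fun u => f u ⊔ g u) (P + Q) := by
  intro u
  obtain ⟨hbound₁, V₁, hV₁, hfV⟩ := hf u
  obtain ⟨hbound₂, V₂, hV₂, hgV⟩ := hg u
  refine ⟨fun v hv hvu => ?_, V₁ ∪ V₂, fun v hv => ?_, by rw [Finset.sup_union, ← hfV, ← hgV]⟩
  · rcases (Language.mem_add _ _ _).mp hv with hv | hv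
    · exact le_sup_of_le_left (hbound₁ v hv hvu)
    · exact le_sup_of_le_right (hbound₂ v hv hvu)
  · rcases Finset.mem_union.mp hv with hv | hv
    · exact ⟨(Language.mem_add _ _ _).mpr (Or.inl (hV₁ v hv).1), (hV₁ v hv).2⟩
    · exact ⟨(Language.mem_add _ _ _).mpr (Or.inr (hV₂ v hv).1), (hV₂ v hv).2⟩

lemma fconcat (hf : IsFiniteShuffleJoin φY f P) (hg : IsFiniteShuffleJoin φY g Q) :
    IsFiniteShuffleJoin φY (fconcat f g) (P * Q) := by
  choose V₁ hV₁ hfV using fun u => (hf u).2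
  choose V₂ hV₂ hgV using fun u => (hg u).2
  intro u
  refine ⟨?_, (Finset.range (u.length + 1)).biUnion fun i =>
    Finset.image₂ (· ++ ·) (V₁ (u.take i)) (V₂ (u.drop i)), ?_, ?_⟩
  · rintro _ ⟨a, ha, b, hb, rfl⟩ rfl
    simp only [phiStar_append, List.filterMap_append]
    exact (mul_le_mul' ((hf _).1 a ha rfl) ((hg _).1 b hb rfl)).trans (le_fconcat f g _ _)
  · simp only [Finset.mem_biUnion, Finset.mem_image₂]
    rintro _ ⟨i, -, a, ha, b, hb, rfl⟩
    refine ⟨⟨a, (hV₁ _ a ha).1, b, (hV₂ _ b hb).1, rfl⟩, ?_⟩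
    change (a ++ b).filterMap _ = u
    rw [List.filterMap_append, (hV₁ _ a ha).2, (hV₂ _ b hb).2, List.take_append_drop]
  · rw [Finset.sup_biUnion]
    refine Finset.sup_congr rfl fun i _ => ?_
    rw [finset_sup_phiStar_image₂_append, ← hfV, ← hgV]

lemma fpow (hf : IsFiniteShuffleJoin φY f P) (n : ℕ) :
    IsFiniteShuffleJoin φY (fpow f n) (P ^ n) := by
  induction n with
  | zero => rw [pow_zero]; exact isFiniteShuffleJoin_one φY
  | succ n ih => rw [pow_succ]; exact ih.fconcat hf

lemma kstar (hf : IsFiniteShuffleJoin φY f P)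
    (hg : ∀ u, IsLUB {l | ∃ n : ℕ, l = Fz.fpow f n u} (g u)) :
    IsFiniteShuffleJoin φY g P∗ := by
  intro u
  choose V hV hfV using fun n => (hf.fpow n u).2
  refine ⟨fun v hv hvu => ?_, (Finset.range (u.length + 1)).biUnion V, fun v hv => ?_, ?_⟩
  · rw [Language.kstar_eq_iSup_pow, Language.mem_iSup] at hv
    obtain ⟨n, hn⟩ := hv
    exact ((hf.fpow n u).1 v hn hvu).trans ((hg u).1 ⟨n, rfl⟩)
  · obtain ⟨n, -, hv⟩ := Finset.mem_biUnion.mp hv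
    rw [Language.kstar_eq_iSup_pow, Language.mem_iSup]
    exact ⟨⟨n, (hV n v hv).1⟩, (hV n v hv).2⟩
  · rw [eq_sup_fpow_of_isLUB (hg u), Finset.sup_biUnion]
    exact Finset.sup_congr rfl fun n _ => hfV n

lemma isLUB [DecidablePred (· ∈ P)] (h : IsFiniteShuffleJoin φY f P) (u : List X) :
    IsLUB {l | ∃ v ∈ UY Y u, l = phiStar φY v * if v ∈ P then 1 else ⊥} (f u) := by
  obtain ⟨hbound, V, hV, hfV⟩ := h u
  refine ⟨?_, fun b hb => hfV ▸ Finset.sup_le fun v hv => ?_⟩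
  · rintro _ ⟨v, hvu, rfl⟩
    split_ifs with hv
    · simpa using hbound v hv hvu
    · simp [LMonoid.mul_bot]
  · simpa [(hV v hv).1] using hb ⟨v, (hV v hv).2, rfl⟩

end IsFiniteShuffleJoin

theorem isFiniteShuffleJoin_of_isNorm (sc : L → Y) {α : FRE X L} {f : List X → L}
    (hf : IsNorm α f) (hφ : ∀ l ∈ α.scalars, φY (sc l) = l) :
    IsFiniteShuffleJoin φY f (toReg sc α).matches' := by
  induction hf with
  | zero => exact isFiniteShuffleJoin_zero φY
  | eps => exact isFiniteShuffleJoin_one φY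
  | char x =>
    have h := isFiniteShuffleJoin_singleton φY [Sum.inl x]
    simp only [phiStar, List.filterMap_cons, Sum.getLeft?_inl, List.filterMap_nil, List.map_cons,
      Sum.elim_inl, List.map_nil, List.prod_singleton] at h
    exact h
  | smul lam _ ih =>
    have h := (ih fun l hl => hφ l (Set.mem_insert_of_mem _ hl)).smul (sc lam)
    rwa [hφ lam (Set.mem_insert _ _)] at h
  | plus _ _ ih₁ ih₂ =>
    exact (ih₁ fun l hl => hφ l (Or.inl hl)).sup (ih₂ fun l hl => hφ l (Or.inr hl))
  | comp _ _ ih₁ ih₂ =>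
    exact (ih₁ fun l hl => hφ l (Or.inl hl)).fconcat (ih₂ fun l hl => hφ l (Or.inr hl))
  | star _ hg ih => exact (ih hφ).kstar hg

end Fz

open Fz in
theorem stmt5_general {L X Y : Type*} [IntegralLMonoid L]
    (α : FRE X L) (sc : L → Y) (φY : Y → L)
    (hφY : ∀ l ∈ α.scalars, φY (sc l) = l)
    (f : List X → L) (hf : IsNorm α f) :
    ∀ u : List X,
      IsLUB {l | ∃ v ∈ UY Y u, l = phiStar φY v * langR sc α v} (f u) :=
  (isFiniteShuffleJoin_of_isNorm sc hf hφY).isLUB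

open Fz in
/-- **Theorem 1 of the paper.** Let `L` be an integral ℓ-monoid, `α` a fuzzy
regular expression over a finite alphabet `X`, and `Y` the alphabet associated with `α`
(a finite alphabet, disjoint from `X`, in bijection `λ ↦ λ' = sc λ` with the set of
scalars occurring in `α`, with `φY` the inverse assignment `λ' ↦ λ`).  Then for every
`u ∈ X*` the set `{φ*_α(v) ⊗ ‖α_R‖(v) : v ∈ U_Y(u)}` has a least upper bound in `L` and
`‖α‖(u) = ⋁_{v ∈ U_Y(u)} φ*_α(v) ⊗ ‖α_R‖(v)`. -/
theorem stmt5 {L X Y : Type*} [IntegralLMonoid L] [Fintype X] [Fintype Y]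
    (α : FRE X L) (sc : L → Y) (φY : Y → L)
    (hsc : Set.BijOn sc α.scalars (Set.univ : Set Y))
    (hφY : ∀ l ∈ α.scalars, φY (sc l) = l)
    (f : List X → L) (hf : IsNorm α f) :
    ∀ u : List X,
      IsLUB {l | ∃ v ∈ UY Y u, l = phiStar φY v * langR sc α v} (f u) :=
  stmt5_general α sc φY hφY f hf
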